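/- Let U be the 3×3 integer matrix [[1,0,1],[0,1,1],[1,1,1]]. Then for every integer n ≥ 1, the n-th power of U equals the matrix [[a_n, r_n, E_n], [r_n, a_n, E_n], [E_n, E_n, r_n+a_n]]. -/
import Mathlib


def pellE : ℕ → ℤ
  | 0 => 0
  | 1 => 1
  | n + 2 => 2 * pellE (n + 1) + pellE n

def seqR : ℕ → ℤ
  | 0 => 0
  | 1 => 0
  | 2 => 1
  | n + 3 => 2 * seqR (n + 2) + seqR (n + 1) + 1

def seqA : ℕ → ℤ
  | 0 => 1
  | 1 => 1
  | 2 => 2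
  | n + 3 => 3 * seqA (n + 2) - seqA (n + 1) - seqA n

def Q (n : ℕ) : Prop :=
  seqA n = seqR n + 1 ∧ seqA (n+1) = seqA n + pellE n ∧
  seqR (n+1) = seqR n + pellE n ∧ pellE (n+1) = seqA n + seqR n + pellE n

lemma Qpair : ∀ n, Q n ∧ Q (n+1) := by
  intro n
  induction n with
  | zero =>
    constructor <;> refine ⟨?_, ?_, ?_, ?_⟩ <;> simp [Q, seqA, seqR, pellE]
  | succ n ih =>
    obtain ⟨⟨h1, h2, h3, h4⟩, ⟨g1, g2, g3, g4⟩⟩ := ih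
    refine ⟨⟨g1, g2, g3, g4⟩, ?_, ?_, ?_, ?_⟩
    · linarith
    · show seqA (n+3) = _
      rw [seqA]; linarith
    · show seqR (n+3) = _
      rw [seqR]; linarith
    · show pellE (n+3) = _
      rw [pellE]; linarith

theorem stmt18 (n : ℕ) (hn : 1 ≤ n) :
    (!![1, 0, 1; 0, 1, 1; 1, 1, 1] : Matrix (Fin 3) (Fin 3) ℤ) ^ n =
      !![seqA n, seqR n, pellE n;
         seqR n, seqA n, pellE n;
         pellE n, pellE n, seqR n + seqA n] := by
  induction n, hn using Nat.le_induction with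
  | base =>
    simp [seqA, seqR, pellE]
  | succ n hn ih =>
    obtain ⟨⟨h1, h2, h3, h4⟩, _⟩ := Qpair n
    rw [pow_succ, ih]
    ext i j
    fin_cases i <;> fin_cases j <;>
      simp [Matrix.mul_apply, Fin.sum_univ_succ] <;> linarith
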